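/- Let m ≥ 2, n ≥ 1, k ≥ 1 be integers and let S_1,…,S_m be finite multisets with elements in {1,…,n} such that |S_i| ≤ k−1 for all i and Σ_{i=1}^m |S_i| = (m−1)k. Suppose that the only polynomials q_1,…,q_m ∈ K[x] with deg q_i ≤ k−1−|S_i| for all i and Σ_{i=1}^m q_i·p_{S_i} = 0 are q_1 = ⋯ = q_m = 0 (equivalently, det T ≠ 0 for the associated coefficient matrix T). Then for every nonempty I ⊆ {1,…,m}, k − |⋂_{i∈I} S_i| ≥ Σ_{i∈I} (k − |S_i|), where the intersection of multisets takes the minimum of the multiplicities. -/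
import Mathlib


/-- `K = Frac(ℚ[α₁,…,αₙ])`, the field of rational functions in `n` indeterminates over `ℚ`. -/
noncomputable abbrev Kf (n : ℕ) : Type := FractionRing (MvPolynomial (Fin n) ℚ)

/-- For a multiset `S` with elements in `{1,…,n}`, the polynomial
`p_S(x) = ∏_{j ∈ S} (x - α_j)` (product taken with multiplicity). -/
noncomputable def pS {n : ℕ} (S : Multiset (Fin n)) : Polynomial (Kf n) :=
  (S.map (fun j => Polynomial.X -
    Polynomial.C (algebraMap (MvPolynomial (Fin n) ℚ) (Kf n) (MvPolynomial.X j)))).prod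

set_option maxHeartbeats 1000000
set_option synthInstance.maxHeartbeats 400000

lemma pS_monic {n : ℕ} (S : Multiset (Fin n)) : (pS S).Monic := by
  apply Polynomial.monic_multiset_prod_of_monic
  intro j _
  exact Polynomial.monic_X_sub_C _

lemma pS_ne_zero {n : ℕ} (S : Multiset (Fin n)) : pS S ≠ 0 :=
  (pS_monic S).ne_zero

lemma pS_natDegree {n : ℕ} (S : Multiset (Fin n)) : (pS S).natDegree = S.card := by
  rw [pS, Polynomial.natDegree_multiset_prod_of_monic]
  · rw [Multiset.map_map]
    simp [Function.comp]
  · intro f hf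
    rcases Multiset.mem_map.1 hf with ⟨j, _, rfl⟩
    exact Polynomial.monic_X_sub_C _

lemma pS_add {n : ℕ} (A B : Multiset (Fin n)) : pS (A + B) = pS A * pS B := by
  rw [pS, pS, pS, Multiset.map_add, Multiset.prod_add]

/-- **Theorem 1.** If the only polynomials `q₁,…,q_m` with
`deg q_i ≤ k-1-|S_i|` and `∑ q_i p_{S_i} = 0` are all zero (i.e. `det T ≠ 0`), then the
GM-MDS condition `k - |⋂_{i∈I} S_i| ≥ ∑_{i∈I} (k - |S_i|)` holds for all nonempty `I`. -/
theorem gmmds_condition_necessary (m n k : ℕ) (hm : 2 ≤ m) (hn : 1 ≤ n) (hk : 1 ≤ k)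
    (S : Fin m → Multiset (Fin n))
    (hcard : ∀ i, ((S i).card : ℤ) ≤ (k : ℤ) - 1)
    (hsum : ∑ i, (S i).card = (m - 1) * k)
    (htriv : ∀ q : Fin m → Polynomial (Kf n),
      (∀ i, q i ≠ 0 → ((q i).natDegree : ℤ) ≤ (k : ℤ) - 1 - ((S i).card : ℤ)) →
      ∑ i, q i * pS (S i) = 0 → ∀ i, q i = 0) :
    ∀ I : Finset (Fin m), ∀ hI : I.Nonempty,
      (k : ℤ) - ((I.inf' hI S).card : ℤ) ≥ ∑ i ∈ I, ((k : ℤ) - ((S i).card : ℤ)) := by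
  intro I hI
  by_contra hcon
  push_neg at hcon
  set K := Kf n
  set T : Multiset (Fin n) := I.inf' hI S with hTdef
  -- basic cardinality facts
  have hcardk : ∀ i, (S i).card + 1 ≤ k := by
    intro i
    have := hcard i
    omega
  have hTle : ∀ i ∈ I, T ≤ S i := fun i hi => Finset.inf'_le S hi
  have hTcard : ∀ i ∈ I, T.card ≤ (S i).card :=
    fun i hi => Multiset.card_le_card (hTle i hi)
  obtain ⟨i₀, hi₀⟩ := hI
  have hTk : T.card + 1 ≤ k := le_trans (by have := hTcard i₀ hi₀; omega) (hcardk i₀)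
  -- the linear map
  let ψ : (∀ i : I, Polynomial.degreeLT K (k - (S i.1).card)) →ₗ[K] Polynomial K :=
    { toFun := fun q => ∑ i : I, (q i : Polynomial K) * pS (S i.1 - T)
      map_add' := by
        intro a b
        simp [add_mul, Finset.sum_add_distrib]
      map_smul' := by
        intro r a
        simp [Finset.smul_sum, smul_mul_assoc] }
  have hmem : ∀ q, ψ q ∈ Polynomial.degreeLT K (k - T.card) := by
    intro q
    apply Submodule.sum_mem
    intro i _
    rw [Polynomial.mem_degreeLT]
    rcases eq_or_ne ((q i : Polynomial K)) 0 with h0 | h0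
    · rw [h0, zero_mul, Polynomial.degree_zero, Nat.cast_withBot]
      exact WithBot.bot_lt_coe _
    · have hqi := (q i).2
      rw [Polynomial.mem_degreeLT] at hqi
      have hqd : (q i : Polynomial K).natDegree < k - (S i.1).card :=
        (Polynomial.natDegree_lt_iff_degree_lt h0).2 hqi
      have hne : (q i : Polynomial K) * pS (S i.1 - T) ≠ 0 :=
        mul_ne_zero h0 (pS_ne_zero _)
      rw [← Polynomial.natDegree_lt_iff_degree_lt hne,
        Polynomial.natDegree_mul h0 (pS_ne_zero _), pS_natDegree,
        Multiset.card_sub (hTle i.1 i.2)]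
      have h1 := hcardk i.1
      have h2 := hTcard i.1 i.2
      omega
  let φ : (∀ i : I, Polynomial.degreeLT K (k - (S i.1).card)) →ₗ[K]
      Polynomial.degreeLT K (k - T.card) := ψ.codRestrict _ hmem
  -- finrank comparison
  haveI : ∀ d : ℕ, Module.Finite K (Polynomial.degreeLT K d) := fun d =>
    Module.Finite.equiv (Polynomial.degreeLTEquiv K d).symm
  have hfr : ∀ d : ℕ, Module.finrank K (Polynomial.degreeLT K d) = d := fun d =>
    (LinearEquiv.finrank_eq (Polynomial.degreeLTEquiv K d)).trans (Module.finrank_fin_fun K)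
  have hdomain : Module.finrank K (∀ i : I, Polynomial.degreeLT K (k - (S i.1).card)) =
      ∑ i ∈ I, (k - (S i).card) := by
    rw [Module.finrank_pi_fintype]
    rw [← Finset.sum_attach I (fun i => k - (S i).card)]
    exact Finset.sum_congr rfl fun i _ => hfr _
  -- the strict inequality of dimensions
  have hZsum : ((∑ i ∈ I, (k - (S i).card) : ℕ) : ℤ) = ∑ i ∈ I, ((k : ℤ) - ((S i).card : ℤ)) := by
    rw [Nat.cast_sum]
    refine Finset.sum_congr rfl fun i _ => ?_
    have := hcardk i
    push_cast [Nat.cast_sub (by omega : (S i).card ≤ k)]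
    ring
  have hlt : Module.finrank K (Polynomial.degreeLT K (k - T.card)) <
      Module.finrank K (∀ i : I, Polynomial.degreeLT K (k - (S i.1).card)) := by
    rw [hfr, hdomain]
    have : ((k - T.card : ℕ) : ℤ) < ((∑ i ∈ I, (k - (S i).card) : ℕ) : ℤ) := by
      rw [hZsum, Nat.cast_sub (by omega : T.card ≤ k)]
      exact hcon
    exact_mod_cast this
  -- a nontrivial kernel element
  have hnotinj : ¬ Function.Injective φ := fun hinj =>
    absurd (LinearMap.finrank_le_finrank_of_injective hinj) (not_le.2 hlt)
  rw [Function.not_injective_iff] at hnotinj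
  obtain ⟨a, b, hab, hne⟩ := hnotinj
  set c := a - b with hcdef
  have hc : ψ c = 0 := by
    have : φ c = 0 := by
      rw [hcdef]
      exact (map_sub φ a b).trans (sub_eq_zero.2 hab)
    have := congrArg (Subtype.val) this
    simpa [φ, LinearMap.codRestrict] using this
  have hcne : c ≠ 0 := sub_ne_zero.2 hne
  -- build the global tuple
  classical
  set Q : Fin m → Polynomial K := fun i =>
    if h : i ∈ I then (c ⟨i, h⟩ : Polynomial K) else 0 with hQdef
  have hQdeg : ∀ i, Q i ≠ 0 → ((Q i).natDegree : ℤ) ≤ (k : ℤ) - 1 - ((S i).card : ℤ) := by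
    intro i hQi
    by_cases h : i ∈ I
    · have hmem' := (c ⟨i, h⟩).2
      rw [Polynomial.mem_degreeLT] at hmem'
      have hQieq : Q i = (c ⟨i, h⟩ : Polynomial K) := by simp [hQdef, h]
      rw [hQieq] at hQi ⊢
      have hd : (c ⟨i, h⟩ : Polynomial K).natDegree < k - (S i).card :=
        (Polynomial.natDegree_lt_iff_degree_lt hQi).2 hmem'
      have h1 := hcardk i
      omega
    · exact absurd (by simp [hQdef, h]) hQi
  have hQsum : ∑ i, Q i * pS (S i) = 0 := by
    have hstep : ∑ i, Q i * pS (S i) = ∑ i ∈ I, Q i * pS (S i) := by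
      rw [← Finset.sum_subset (Finset.subset_univ I)]
      intro i _ hi
      simp [hQdef, hi]
    rw [hstep]
    have hstep2 : ∑ i ∈ I, Q i * pS (S i) =
        ∑ i : I, (c i : Polynomial K) * pS (S i.1 - T) * pS T := by
      rw [← Finset.sum_attach I (fun i => Q i * pS (S i))]
      refine Finset.sum_congr rfl fun i _ => ?_
      have hQieq : Q i.1 = (c i : Polynomial K) := by simp [hQdef, i.2]
      have hpS : pS (S i.1) = pS (S i.1 - T) * pS T := by
        rw [← pS_add, tsub_add_cancel_of_le (hTle i.1 i.2)]
      rw [hQieq, hpS, mul_assoc]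
    rw [hstep2, ← Finset.sum_mul]
    have : (∑ i : I, (c i : Polynomial K) * pS (S i.1 - T)) = ψ c := rfl
    rw [this, hc, zero_mul]
  have hall := htriv Q hQdeg hQsum
  apply hcne
  funext i
  have : Q i.1 = 0 := hall i.1
  rw [hQdef] at this
  simp only [i.2, dif_pos] at this
  exact Subtype.ext (by simpa using this)
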